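/- Every θ_3'-graph, obtained from a theta graph θ(p,q,r) by adding an ear whose endpoints are both distinct from the two degree-3 vertices of θ(p,q,r), is a nice 4-cactus: every edge lies in at most 4 cycles and some edge lies in exactly 4 cycles. -/

import Mathlib

open SimpleGraph

variable {V : Type}

/-- `C` is a cycle subgraph of `H`. -/
def IsCycleSub (H : SimpleGraph V) (C : H.Subgraph) : Prop :=
  ∃ (v : V) (w : H.Walk v v), w.IsCycle ∧ w.toSubgraph = C

/-- The set of cycle subgraphs of `H` containing the edge `e`. -/
def CyclesThrough (H : SimpleGraph V) (e : Sym2 V) : Set H.Subgraph :=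
  {C | IsCycleSub H C ∧ e ∈ C.edgeSet}

/-- A `k`-cactus: a connected graph in which each edge lies in at most `k` cycles. -/
def IsKCactus (H : SimpleGraph V) (k : ℕ) : Prop :=
  H.Connected ∧ ∀ e ∈ H.edgeSet, (CyclesThrough H e).ncard ≤ k

/-- A graph is 2-connected: at least 3 vertices, connected, and no cut-vertex. -/
def TwoConnected [Fintype V] (H : SimpleGraph V) : Prop :=
  3 ≤ Fintype.card V ∧ H.Connected ∧
    ∀ v : V, ((⊤ : H.Subgraph).deleteVerts {v}).coe.Connected

/-- A subgraph is 2-connected. -/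
def SubTwoConn {H : SimpleGraph V} (B : H.Subgraph) : Prop :=
  3 ≤ B.verts.ncard ∧ B.Connected ∧ ∀ v : V, (B.deleteVerts {v}).coe.Connected

/-- `Q` is an ear of `F` with end-vertices `a` and `b`: a nontrivial path whose
end-vertices lie in `F` but whose internal vertices (and edges) do not. -/
def IsEarWith {H : SimpleGraph V} (F Q : H.Subgraph) (a b : V) : Prop :=
  a ∈ F.verts ∧ b ∈ F.verts ∧
    ∃ p : H.Walk a b, p.IsPath ∧ 1 ≤ p.length ∧ p.toSubgraph = Q ∧
      (∀ w ∈ p.support, w ≠ a → w ≠ b → w ∉ F.verts) ∧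
      ∀ e ∈ p.edges, e ∉ F.edgeSet

/-- `Q` is an ear of `F`. -/
def IsEar {H : SimpleGraph V} (F Q : H.Subgraph) : Prop :=
  ∃ a b, IsEarWith F Q a b

/-- `A` is a `k`-theta subgraph with branch vertices `u` and `v`:
the union of `k` internally disjoint paths from `u` to `v`, at most one of length 1. -/
def IsThetaSubUV {H : SimpleGraph V} (A : H.Subgraph) (k : ℕ) (u v : V) : Prop :=
  u ≠ v ∧ ∃ p : Fin k → H.Walk u v,
    (∀ i, (p i).IsPath) ∧ (∀ i, 1 ≤ (p i).length) ∧
    (∀ i j, i ≠ j → ∀ w ∈ (p i).support, w ∈ (p j).support → w = u ∨ w = v) ∧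
    {i | (p i).length = 1}.Subsingleton ∧
    (⨆ i, (p i).toSubgraph) = A

/-- `A` is a `k`-theta subgraph. -/
def IsThetaSub {H : SimpleGraph V} (A : H.Subgraph) (k : ℕ) : Prop :=
  ∃ u v, IsThetaSubUV A k u v

/-- `G` is (as a whole graph) a `k`-theta graph. -/
def IsThetaGraph (G : SimpleGraph V) (k : ℕ) : Prop :=
  IsThetaSub (⊤ : G.Subgraph) k

/-- `B` is a `θ₃'`-subgraph: a theta graph together with an ear whose
end-vertices avoid the two branch (degree-3) vertices. -/
def IsThetaPrimeSub {H : SimpleGraph V} (B : H.Subgraph) : Prop :=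
  ∃ (A Q : H.Subgraph) (u v a b : V), IsThetaSubUV A 3 u v ∧ IsEarWith A Q a b ∧
    a ≠ u ∧ a ≠ v ∧ b ≠ u ∧ b ≠ v ∧ A ⊔ Q = B

/-- `G` is (as a whole graph) a `θ₃'`-graph. -/
def IsThetaPrimeGraph (G : SimpleGraph V) : Prop :=
  IsThetaPrimeSub (⊤ : G.Subgraph)

/-- The subgraph `B` has no cut-vertex. -/
def NoCutVtx {H : SimpleGraph V} (B : H.Subgraph) : Prop :=
  ∀ v : V, (B.deleteVerts {v}).coe.Preconnected

/-- `B` is a block of `H`: a maximal connected subgraph without a cut-vertex. -/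
def IsBlock (H : SimpleGraph V) (B : H.Subgraph) : Prop :=
  B.Connected ∧ NoCutVtx B ∧
    ∀ C : H.Subgraph, B ≤ C → C.Connected → NoCutVtx C → C = B

/-- `B` is a single-edge subgraph. -/
def IsSingleEdgeSub {H : SimpleGraph V} (B : H.Subgraph) : Prop :=
  ∃ (a b : V) (h : H.Adj a b), B = H.subgraphOfAdj h

/-- The set of cycle subgraphs of `H` lying inside `A` and containing the edge `e`. -/
def CyclesThroughIn (H : SimpleGraph V) (A : H.Subgraph) (e : Sym2 V) : Set H.Subgraph :=
  {C | IsCycleSub H C ∧ C ≤ A ∧ e ∈ C.edgeSet}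

/-- `[Q 0, Q 1, …, Q l]` is an ear decomposition of `H`. -/
def IsEarDecomp (H : SimpleGraph V) (l : ℕ) (Q : Fin (l + 1) → H.Subgraph) : Prop :=
  IsCycleSub H (Q 0) ∧
  (∀ i : Fin (l + 1), 0 < (i : ℕ) →
    IsEar (⨆ j : Fin (l + 1), ⨆ _ : j < i, Q j) (Q i)) ∧
  (∀ i j, i ≠ j → Disjoint (Q i).edgeSet (Q j).edgeSet) ∧
  (⨆ i, Q i) = ⊤


/-!
The θ-graph has `|E| = |V| + 1` and each ear adds one more edge than vertices, so a connected
θ₃'-graph has cyclomatic number `|E| - |V| + 1 = 3`. Over `𝔽₂` the edge indicators of cycles lie in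
the kernel of the boundary map `𝔽₂^E → 𝔽₂^V`, which therefore has dimension at most 3, and a cycle
is determined by its edge set. The kernel vectors with a `1` at a given edge form a coset of a
hyperplane of the kernel, so every edge lies on at most 4 cycles.

For the lower bound let `u, v` be the branch vertices, `s` the ear from `x` to `y`, `p` a
branch through `x` and `e` an edge of `p` between `u` and `x`. The branches `p, q, r` give two
cycles through `e`. If `y` also lies on `p`, rerouting `p` through `s` gives a `u`–`v` path
forming a second theta graph with `q` and `r`. Otherwise `y` splits another branch `q = R₁ R₂`,
and with `S₁` the part of `p` from `u` to `x`, the paths `S₁ s`, `R₁` and `r R₂⁻¹` from `u` to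
`y` form a second theta graph. Its two cycles through `e` contain an edge of `s` and the first
two do not, so `e` lies on four cycles.
-/

open Module in
theorem two_mul_ncard_setOf_apply_eq_one_le {ι : Type*} [Finite ι]
    (W : Submodule (ZMod 2) (ι → ZMod 2)) (i : ι) :
    2 * {f | f ∈ W ∧ f i = 1}.ncard ≤ 2 ^ finrank (ZMod 2) W := by
  rcases Set.eq_empty_or_nonempty {f | f ∈ W ∧ f i = 1} with hS | ⟨f₀, hf₀W, hf₀i⟩
  · simp [hS]
  set W₀ := W ⊓ LinearMap.ker (LinearMap.proj i : (ι → ZMod 2) →ₗ[ZMod 2] ZMod 2)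
  have hlt : W₀ < W := by
    refine lt_of_le_of_ne inf_le_left fun h => ?_
    have : f₀ ∈ W₀ := h ▸ hf₀W
    simp [W₀, hf₀i] at this
  have hinj : {f | f ∈ W ∧ f i = 1}.ncard ≤ (W₀ : Set (ι → ZMod 2)).ncard := by
    refine Set.ncard_le_ncard_of_injOn (· + f₀) ?_ (fun _ _ _ _ => add_right_cancel)
      (Set.toFinite _)
    rintro f ⟨hfW, hfi⟩
    refine ⟨W.add_mem hfW hf₀W, ?_⟩
    simp [hfi, hf₀i, CharTwo.add_self_eq_zero]
  have hW₀ : (W₀ : Set (ι → ZMod 2)).ncard = 2 ^ finrank (ZMod 2) W₀ := by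
    rw [← Nat.card_coe_set_eq, SetLike.coe_sort_coe, natCard_eq_pow_finrank (K := ZMod 2),
      Nat.card_zmod]
  calc 2 * {f | f ∈ W ∧ f i = 1}.ncard ≤ 2 ^ (finrank (ZMod 2) W₀ + 1) := by
        rw [pow_succ]; linarith
    _ ≤ 2 ^ finrank (ZMod 2) W :=
        Nat.pow_le_pow_right two_pos (Submodule.finrank_lt_finrank_of_lt hlt)

namespace SimpleGraph

variable {G : SimpleGraph V} {u v a b : V}

namespace Walk

theorem one_le_length_of_ne (p : G.Walk u v) (huv : u ≠ v) : 1 ≤ p.length :=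
  Nat.one_le_iff_ne_zero.mpr (mt eq_of_length_eq_zero huv)

theorem exists_edge_of_ne (p : G.Walk u v) (huv : u ≠ v) : ∃ e, e ∈ p.edges :=
  List.exists_mem_of_ne_nil _ (mt edges_eq_nil.mp (not_nil_of_ne huv))

theorem IsPath.start_notMem_support_tail {p : G.Walk u v} (hp : p.IsPath) :
    u ∉ p.support.tail := by
  have := hp.support_nodup
  rw [← cons_tail_support] at this
  exact (List.nodup_cons.mp this).1

theorem IsPath.append {w : V} {p : G.Walk u v} {q : G.Walk v w} (hp : p.IsPath) (hq : q.IsPath)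
    (h : ∀ x ∈ p.support, x ∈ q.support → x = v) : (p.append q).IsPath := by
  rw [isPath_def, support_append, List.nodup_append']
  refine ⟨hp.support_nodup, hq.support_nodup.tail, fun x hxp hxq => ?_⟩
  obtain rfl := h x hxp (List.mem_of_mem_tail hxq)
  exact hq.start_notMem_support_tail hxq

theorem IsPath.eq_of_mem_support_append {w x : V} {p : G.Walk u v} {q : G.Walk v w}
    (h : (p.append q).IsPath) (hp : x ∈ p.support) (hq : x ∈ q.support) : x = v := by
  by_contra hx
  exact h.ne_of_mem_support_of_append hx hp hq rfl

theorem exists_append_append_of_mem_support {x y : V} (P : G.Walk u v)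
    (hx : x ∈ P.support) (hy : y ∈ P.support) :
    (∃ (S₁ : G.Walk u x) (S₂ : G.Walk x y) (S₃ : G.Walk y v), P = S₁.append (S₂.append S₃)) ∨
      ∃ (S₁ : G.Walk u y) (S₂ : G.Walk y x) (S₃ : G.Walk x v), P = S₁.append (S₂.append S₃) := by
  obtain ⟨S, T, rfl⟩ := P.mem_support_iff_exists_append.mp hx
  rcases (mem_support_append_iff _ _).mp hy with hy | hy
  · obtain ⟨S₁, S₂, rfl⟩ := S.mem_support_iff_exists_append.mp hy
    exact Or.inr ⟨S₁, S₂, T, (append_assoc _ _ _).symm⟩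
  · obtain ⟨S₂, S₃, rfl⟩ := T.mem_support_iff_exists_append.mp hy
    exact Or.inl ⟨S, S₂, S₃, rfl⟩

theorem finite_verts_toSubgraph (p : G.Walk u v) : p.toSubgraph.verts.Finite := by
  rw [verts_toSubgraph]
  exact p.support.finite_toSet

theorem IsPath.ncard_verts_toSubgraph {p : G.Walk u v} (hp : p.IsPath) :
    p.toSubgraph.verts.ncard = p.length + 1 := by
  classical
  rw [verts_toSubgraph, ← List.coe_toFinset, Set.ncard_coe_finset,
    List.toFinset_card_of_nodup hp.support_nodup, length_support]

theorem ncard_edgeSet_toSubgraph_le (p : G.Walk u v) :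
    p.toSubgraph.edgeSet.ncard ≤ p.length := by
  classical
  rw [edgeSet_toSubgraph, Walk.edgeSet, ← List.coe_toFinset, Set.ncard_coe_finset,
    ← length_edges]
  exact List.toFinset_card_le _

theorem mem_verts_of_toSubgraph_le {F : G.Subgraph} {p : G.Walk u v} (hp : p.toSubgraph ≤ F)
    {w : V} (hw : w ∈ p.support) : w ∈ F.verts :=
  hp.1 ((mem_verts_toSubgraph _).mpr hw)

theorem mem_edgeSet_of_toSubgraph_le {F : G.Subgraph} {p : G.Walk u v} (hp : p.toSubgraph ≤ F)
    {e : Sym2 V} (he : e ∈ p.edges) : e ∈ F.edgeSet :=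
  Subgraph.edgeSet_mono hp ((mem_edges_toSubgraph _).mpr he)

end Walk

theorem IsEarWith.symm {F Q : G.Subgraph} (h : IsEarWith F Q a b) : IsEarWith F Q b a := by
  obtain ⟨ha, hb, q, hq, hlen, rfl, hint, hedge⟩ := h
  exact ⟨hb, ha, q.reverse, hq.reverse, by simpa, q.toSubgraph_reverse,
    fun w hw h₁ h₂ => hint w (by simpa using hw) h₂ h₁, fun e he => hedge e (by simpa using he)⟩

theorem IsEarWith.exists_isPath {F Q : G.Subgraph} (h : IsEarWith F Q a b) :
    ∃ q : G.Walk a b, q.IsPath ∧ a ≠ b ∧ q.toSubgraph = Q ∧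
      (∀ w ∈ q.support, w ∈ F.verts → w = a ∨ w = b) ∧ ∀ e ∈ q.edges, e ∉ F.edgeSet := by
  obtain ⟨-, -, q, hq, hlen, hQ, hint, hedge⟩ := h
  refine ⟨q, hq, ?_, hQ, fun w hw hwF => ?_, hedge⟩
  · rintro rfl
    rw [Walk.length_eq_zero_iff.mpr (Walk.isPath_iff_nil.mp hq)] at hlen
    omega
  · by_contra! hne
    exact hint w hw hne.1 hne.2 hwF

theorem Subgraph.Connected.sup_toSubgraph {F : G.Subgraph} (hF : F.Connected) (p : G.Walk a b)
    (ha : a ∈ F.verts) : (F ⊔ p.toSubgraph).Connected :=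
  connected_sup hF.preconnected p.toSubgraph_connected.preconnected
    ⟨a, ha, p.start_mem_verts_toSubgraph⟩

theorem Subgraph.ncard_edgeSet_sup_toSubgraph_le [Finite V] (F : G.Subgraph) (p : G.Walk u v) :
    (F ⊔ p.toSubgraph).edgeSet.ncard ≤ F.edgeSet.ncard + p.length :=
  calc (F ⊔ p.toSubgraph).edgeSet.ncard ≤ F.edgeSet.ncard + p.toSubgraph.edgeSet.ncard := by
        rw [edgeSet_sup]; exact Set.ncard_union_le _ _
    _ ≤ _ := by grw [p.ncard_edgeSet_toSubgraph_le]

theorem Subgraph.ncard_verts_sup_toSubgraph [Finite V] {F : G.Subgraph} {p : G.Walk a b}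
    (hp : p.IsPath) (hab : a ≠ b) (ha : a ∈ F.verts) (hb : b ∈ F.verts)
    (hint : ∀ w ∈ p.support, w ∈ F.verts → w = a ∨ w = b) :
    (F ⊔ p.toSubgraph).verts.ncard + 1 = F.verts.ncard + p.length := by
  have hinter : F.verts ∩ p.toSubgraph.verts = {a, b} := by
    ext w
    simp only [Set.mem_inter_iff, Walk.mem_verts_toSubgraph, Set.mem_insert_iff,
      Set.mem_singleton_iff]
    refine ⟨fun ⟨hwF, hwp⟩ => hint w hwp hwF, ?_⟩
    rintro (rfl | rfl)
    exacts [⟨ha, p.start_mem_support⟩, ⟨hb, p.end_mem_support⟩]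
  have := Set.ncard_union_add_ncard_inter F.verts p.toSubgraph.verts
  rw [hinter, Set.ncard_pair hab, hp.ncard_verts_toSubgraph, ← verts_sup] at this
  omega

namespace IsThetaSubUV

variable {A : G.Subgraph}

theorem connected (hA : IsThetaSubUV A 3 u v) : A.Connected := by
  obtain ⟨-, p, -, -, -, -, rfl⟩ := hA
  rw [iSup_fin_three]
  exact ((p 0).toSubgraph_connected.sup_toSubgraph (p 1) (p 0).start_mem_verts_toSubgraph
    ).sup_toSubgraph (p 2) (Or.inl (p 0).start_mem_verts_toSubgraph)

theorem finite_verts (hA : IsThetaSubUV A 3 u v) : A.verts.Finite := by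
  obtain ⟨-, p, -, -, -, -, rfl⟩ := hA
  rw [iSup_fin_three]
  exact ((p 0).finite_verts_toSubgraph.union (p 1).finite_verts_toSubgraph).union
    (p 2).finite_verts_toSubgraph

theorem ncard_edgeSet_le_ncard_verts_add_one [Finite V] (hA : IsThetaSubUV A 3 u v) :
    A.edgeSet.ncard ≤ A.verts.ncard + 1 := by
  obtain ⟨huv, p, hpath, -, hdisj, -, rfl⟩ := hA
  rw [iSup_fin_three]
  have hu := (p 0).start_mem_verts_toSubgraph
  have hv := (p 0).end_mem_verts_toSubgraph
  have h₀ := (hpath 0).ncard_verts_toSubgraph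
  have h₀' := (p 0).ncard_edgeSet_toSubgraph_le
  have h₁ := (p 0).toSubgraph.ncard_edgeSet_sup_toSubgraph_le (p 1)
  have h₁' := Subgraph.ncard_verts_sup_toSubgraph (hpath 1) huv hu hv
    fun w hw hw₀ => hdisj 1 0 (by decide) w hw ((Walk.mem_verts_toSubgraph _).mp hw₀)
  have h₂ := ((p 0).toSubgraph ⊔ (p 1).toSubgraph).ncard_edgeSet_sup_toSubgraph_le (p 2)
  have h₂' := Subgraph.ncard_verts_sup_toSubgraph (F := (p 0).toSubgraph ⊔ (p 1).toSubgraph)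
    (hpath 2) huv (Or.inl hu) (Or.inl hv) fun w hw hw₀₁ => by
      rcases hw₀₁ with hw₀ | hw₁
      · exact hdisj 2 0 (by decide) w hw ((Walk.mem_verts_toSubgraph _).mp hw₀)
      · exact hdisj 2 1 (by decide) w hw ((Walk.mem_verts_toSubgraph _).mp hw₁)
  omega

end IsThetaSubUV

theorem IsCycleSub.eq_of_edgeSet_eq {C C' : G.Subgraph} (hC : IsCycleSub G C)
    (hC' : IsCycleSub G C') (h : C.edgeSet = C'.edgeSet) : C = C' := by
  obtain ⟨_, w, hw, rfl⟩ := hC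
  obtain ⟨_, w', hw', rfl⟩ := hC'
  refine le_antisymm ?_ ?_
  · rw [Walk.toSubgraph_le_iff hw.not_nil, ← Walk.edgeSet_toSubgraph, h]
  · rw [Walk.toSubgraph_le_iff hw'.not_nil, ← Walk.edgeSet_toSubgraph, ← h]

noncomputable def Subgraph.edgeChain (C : G.Subgraph) : G.edgeSet → ZMod 2 :=
  {e : G.edgeSet | (e : Sym2 V) ∈ C.edgeSet}.indicator 1

theorem Subgraph.edgeSet_eq_of_edgeChain_eq {C C' : G.Subgraph}
    (h : C.edgeChain = C'.edgeChain) : C.edgeSet = C'.edgeSet := by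
  ext e
  by_cases he : e ∈ G.edgeSet
  · classical
    have := congrFun h ⟨e, he⟩
    simp only [edgeChain, Set.indicator_apply, Set.mem_ofPred_eq, Pi.one_apply] at this
    split_ifs at this <;> simp_all
  · exact iff_of_false (fun h' => he (C.edgeSet_subset h')) (fun h' => he (C'.edgeSet_subset h'))

section CycleSpace

variable [DecidableEq V]

variable (G) in
/-- The boundary map `𝔽₂^E → 𝔽₂^V`, sending an edge to the sum of its two ends. -/
def boundary [Fintype G.edgeSet] : (G.edgeSet → ZMod 2) →ₗ[ZMod 2] V → ZMod 2 :=
  ∑ e : G.edgeSet, (LinearMap.proj e).smulRight fun x => if x ∈ (e : Sym2 V) then 1 else 0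

def Walk.edgeChain (w : G.Walk u v) : G.edgeSet → ZMod 2 :=
  fun e => (w.edges.count (e : Sym2 V) : ZMod 2)

theorem Walk.edgeChain_cons {m : V} (h : G.Adj u m) (w : G.Walk m v) :
    (Walk.cons h w).edgeChain = Pi.single ⟨s(u, m), h⟩ 1 + w.edgeChain := by
  ext e
  by_cases he : (e : Sym2 V) = s(u, m)
  · simp [edgeChain, Pi.single_apply, Subtype.ext_iff, he, add_comm]
  · simp [edgeChain, Subtype.ext_iff, he, Ne.symm he]

theorem Walk.IsTrail.edgeChain_eq {w : G.Walk u v} (hw : w.IsTrail) :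
    w.edgeChain = w.toSubgraph.edgeChain := by
  ext e
  by_cases he : (e : Sym2 V) ∈ w.edges
  · simp [edgeChain, Subgraph.edgeChain, he,
      List.count_eq_one_of_mem hw.edges_nodup he]
  · simp [edgeChain, Subgraph.edgeChain, he, List.count_eq_zero_of_not_mem he]

variable [Fintype G.edgeSet]

theorem boundary_single (e : G.edgeSet) :
    boundary G (Pi.single e 1) = fun x => if x ∈ (e : Sym2 V) then 1 else 0 := by
  ext x
  simp [boundary, Pi.single_apply, apply_ite (fun f : V → ZMod 2 => f x)]

theorem Walk.boundary_edgeChain (w : G.Walk u v) :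
    boundary G w.edgeChain = Pi.single u 1 + Pi.single v 1 := by
  induction w with
  | @nil w =>
    have : (nil : G.Walk w w).edgeChain = 0 := by ext; simp [edgeChain]
    rw [this, map_zero]
    ext; simp [CharTwo.add_self_eq_zero]
  | @cons u m v h w ih =>
    have hum := h.ne
    rw [edgeChain_cons, map_add, ih, boundary_single]
    ext x
    simp only [Pi.add_apply, Pi.single_apply, Sym2.mem_iff]
    split_ifs <;> simp_all <;> decide

theorem IsCycleSub.edgeChain_mem_ker {C : G.Subgraph} (hC : IsCycleSub G C) :
    C.edgeChain ∈ LinearMap.ker (boundary G) := by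
  obtain ⟨u, w, hw, rfl⟩ := hC
  rw [LinearMap.mem_ker, ← hw.isTrail.edgeChain_eq, w.boundary_edgeChain]
  ext
  exact CharTwo.add_self_eq_zero _

open Module Submodule in
theorem card_le_finrank_range_boundary_add_one [Fintype V] (hG : G.Connected) :
    Fintype.card V ≤ finrank (ZMod 2) (LinearMap.range (boundary G)) + 1 := by
  obtain ⟨v₀⟩ := hG.nonempty
  have hsup : LinearMap.range (boundary G) ⊔ (ZMod 2 ∙ Pi.single v₀ 1) = ⊤ := by
    rw [eq_top_iff, ← (Pi.basisFun (ZMod 2) V).span_eq, span_le]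
    rintro _ ⟨x, rfl⟩
    obtain ⟨w⟩ := hG.preconnected v₀ x
    have hx : Pi.basisFun (ZMod 2) V x = boundary G w.edgeChain + Pi.single v₀ 1 := by
      ext y
      simp only [w.boundary_edgeChain, Pi.basisFun_apply, Pi.add_apply]
      rw [add_right_comm, CharTwo.add_self_eq_zero, zero_add]
    rw [hx]
    exact add_mem (mem_sup_left ⟨_, rfl⟩) (mem_sup_right (mem_span_singleton_self _))
  calc Fintype.card V = finrank (ZMod 2) (⊤ : Submodule (ZMod 2) (V → ZMod 2)) := by
        rw [finrank_top, finrank_fintype_fun_eq_card]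
    _ ≤ _ := hsup ▸ finrank_add_le_finrank_add_finrank _ _
    _ = _ := by rw [finrank_span_singleton (by simp)]

end CycleSpace

open Module in
theorem two_mul_ncard_cyclesThrough_le [Finite V] (hG : G.Connected) {k : ℕ}
    (hk : G.edgeSet.ncard + 1 ≤ Nat.card V + k) {e : Sym2 V} (he : e ∈ G.edgeSet) :
    2 * (CyclesThrough G e).ncard ≤ 2 ^ k := by
  classical
  have := Fintype.ofFinite V
  have hK : finrank (ZMod 2) (LinearMap.ker (boundary G)) ≤ k := by
    have h₁ := LinearMap.finrank_range_add_finrank_ker (boundary G)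
    have h₂ := card_le_finrank_range_boundary_add_one hG
    rw [finrank_fintype_fun_eq_card, ← Nat.card_eq_fintype_card, Nat.card_coe_set_eq] at h₁
    rw [Nat.card_eq_fintype_card] at hk
    omega
  set K := LinearMap.ker (boundary G)
  calc 2 * (CyclesThrough G e).ncard ≤ 2 * {f | f ∈ K ∧ f ⟨e, he⟩ = 1}.ncard := by
        gcongr
        refine Set.ncard_le_ncard_of_injOn Subgraph.edgeChain ?_ ?_ (Set.toFinite _)
        · rintro C ⟨hC, heC⟩
          exact ⟨hC.edgeChain_mem_ker, by simp [Subgraph.edgeChain, heC]⟩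
        · rintro C ⟨hC, -⟩ C' ⟨hC', -⟩ h
          exact hC.eq_of_edgeSet_eq hC' (Subgraph.edgeSet_eq_of_edgeChain_eq h)
    _ ≤ 2 ^ finrank (ZMod 2) K := two_mul_ncard_setOf_apply_eq_one_le K _
    _ ≤ 2 ^ k := Nat.pow_le_pow_right two_pos hK

namespace Walk

/-- `p` and `q` meet only at their ends and are not both the edge `uv`, so that `p` followed by
`q` backwards is a cycle. -/
structure IsCyclePair (p q : G.Walk u v) : Prop where
  isPath_left : p.IsPath
  isPath_right : q.IsPath
  internallyDisjoint : ∀ w ∈ p.support, w ∈ q.support → w = u ∨ w = v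
  three_le_length : 3 ≤ p.length + q.length

namespace IsCyclePair

variable {p q : G.Walk u v}

theorem ne (h : IsCyclePair p q) : u ≠ v := by
  rintro rfl
  have := h.three_le_length
  rw [length_eq_zero_iff.mpr (isPath_iff_nil.mp h.isPath_left),
    length_eq_zero_iff.mpr (isPath_iff_nil.mp h.isPath_right)] at this
  omega

theorem isCycle (h : IsCyclePair p q) : (p.append q.reverse).IsCycle := by
  refine h.isPath_left.isCycle_append h.isPath_right.reverse (fun w hwp hwq => ?_) ?_
  · have hwq' := List.mem_of_mem_tail hwq
    rw [support_reverse, List.mem_reverse] at hwq'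
    rcases h.internallyDisjoint w (List.mem_of_mem_tail hwp) hwq' with rfl | rfl
    · exact h.isPath_left.start_notMem_support_tail hwp
    · exact h.isPath_right.reverse.start_notMem_support_tail hwq
  · have := h.three_le_length
    rw [length_reverse]
    omega

theorem notMem_edges (h : IsCyclePair p q) {e : Sym2 V} (hp : e ∈ p.edges) : e ∉ q.edges := by
  intro hq
  induction e with
  | h x y =>
  have hxy : s(x, y) = s(u, v) := by
    have hne := (p.adj_of_mem_edges hp).ne
    rcases h.internallyDisjoint x (p.fst_mem_support_of_mem_edges hp)
      (q.fst_mem_support_of_mem_edges hq) with rfl | rfl <;>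
    rcases h.internallyDisjoint y (p.snd_mem_support_of_mem_edges hp)
      (q.snd_mem_support_of_mem_edges hq) with rfl | rfl <;> simp_all [Sym2.eq_swap]
  rw [hxy] at hp hq
  have := h.three_le_length
  have := h.isPath_left.length_eq_one_of_mem_edges hp
  have := h.isPath_right.length_eq_one_of_mem_edges hq
  omega

theorem mem_cyclesThrough (h : IsCyclePair p q) {e : Sym2 V} (he : e ∈ p.edges) :
    (p.append q.reverse).toSubgraph ∈ CyclesThrough G e :=
  ⟨⟨u, _, h.isCycle, rfl⟩, by simp [he]⟩

end IsCyclePair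

/-- The three branches of a theta graph. -/
structure IsThetaTriple (p q r : G.Walk u v) : Prop where
  pq : IsCyclePair p q
  pr : IsCyclePair p r
  qr : IsCyclePair q r

namespace IsThetaTriple

variable {p q r : G.Walk u v}

theorem toSubgraph_ne (h : IsThetaTriple p q r) :
    (p.append q.reverse).toSubgraph ≠ (p.append r.reverse).toSubgraph := by
  obtain ⟨f, hf⟩ := q.exists_edge_of_ne h.pq.ne
  intro heq
  have : f ∈ (p.append r.reverse).toSubgraph.edgeSet := heq ▸ (by simp [hf])
  simp only [edgeSet_toSubgraph, Walk.edgeSet, edges_append, edges_reverse, Set.mem_ofPred_eq,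
    List.mem_append, List.mem_reverse] at this
  rcases this with hfp | hfr
  · exact h.pq.notMem_edges hfp hf
  · exact h.qr.notMem_edges hf hfr

theorem four_le_ncard_cyclesThrough [Finite V] {u' v' : V} {p' q' r' : G.Walk u' v'}
    {e f : Sym2 V} (h : IsThetaTriple p q r) (h' : IsThetaTriple p' q' r') (he : e ∈ p.edges)
    (he' : e ∈ p'.edges) (hf : f ∈ p'.edges) (hfp : f ∉ p.edges) (hfq : f ∉ q.edges)
    (hfr : f ∉ r.edges) :
    4 ≤ (CyclesThrough G e).ncard := by
  set S : Set G.Subgraph := {(p.append q.reverse).toSubgraph, (p.append r.reverse).toSubgraph}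
  set S' : Set G.Subgraph :=
    {(p'.append q'.reverse).toSubgraph, (p'.append r'.reverse).toSubgraph}
  have hsub : S ∪ S' ⊆ CyclesThrough G e := by
    rintro C ((rfl | rfl) | (rfl | rfl))
    exacts [h.pq.mem_cyclesThrough he, h.pr.mem_cyclesThrough he, h'.pq.mem_cyclesThrough he',
      h'.pr.mem_cyclesThrough he']
  have hS : ∀ C ∈ S, f ∉ C.edgeSet := by rintro C (rfl | rfl) <;> simp [hfp, hfq, hfr]
  have hS' : ∀ C ∈ S', f ∈ C.edgeSet := by rintro C (rfl | rfl) <;> simp [hf]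
  have hdisj : Disjoint S S' := Set.disjoint_left.mpr fun C hC hC' => hS C hC (hS' C hC')
  calc 4 = (S ∪ S').ncard := by
        rw [Set.ncard_union_eq hdisj, Set.ncard_pair h.toSubgraph_ne,
          Set.ncard_pair h'.toSubgraph_ne]
    _ ≤ _ := Set.ncard_le_ncard hsub

variable {F Qs : G.Subgraph} {x y : V}

theorem exists_four_le_ncard_cyclesThrough_of_ear_same_branch [Finite V] {S₁ : G.Walk u x}
    {S₂ : G.Walk x y} {S₃ : G.Walk y v} (h : IsThetaTriple (S₁.append (S₂.append S₃)) q r)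
    (hP : (S₁.append (S₂.append S₃)).toSubgraph ≤ F) (hQ : q.toSubgraph ≤ F)
    (hR : r.toSubgraph ≤ F) (hear : IsEarWith F Qs x y) (hxu : x ≠ u) :
    ∃ e ∈ G.edgeSet, 4 ≤ (CyclesThrough G e).ncard := by
  obtain ⟨s, hs, hxy, -, hsF, hsF'⟩ := hear.exists_isPath
  have hS := h.pq.isPath_left
  have hS₁ : ∀ w ∈ S₁.support, w ∈ S₂.support ∨ w ∈ S₃.support → w = x := fun w hw hw' =>
    hS.eq_of_mem_support_append hw ((mem_support_append_iff _ _).mpr hw')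
  have hS₂₃ : ∀ w ∈ S₂.support, w ∈ S₃.support → w = y := fun w =>
    hS.of_append_right.eq_of_mem_support_append
  have hsP : ∀ w ∈ s.support, w ∈ S₁.support ∨ w ∈ S₂.support ∨ w ∈ S₃.support → w = x ∨ w = y :=
    fun w hw hwP => hsF w hw (mem_verts_of_toSubgraph_le hP (by simpa using hwP))
  have hends : x ∈ S₁.support ∧ x ∈ S₂.support ∧ y ∈ S₂.support ∧ y ∈ S₃.support := by simp
  have hX : (S₁.append (s.append S₃)).IsPath :=
    hS.of_append_left.append (hs.append hS.of_append_right.of_append_right (by grind))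
      (by simp only [mem_support_append_iff]; grind)
  have hpair : ∀ {T : G.Walk u v}, IsCyclePair (S₁.append (S₂.append S₃)) T → T.toSubgraph ≤ F →
      IsCyclePair (S₁.append (s.append S₃)) T := by
    intro T hT hTF
    refine ⟨hX, hT.isPath_right, fun w hw hwT => hT.internallyDisjoint w ?_ hwT, ?_⟩
    · have := hsF w
      have := mem_verts_of_toSubgraph_le hTF hwT
      simp only [mem_support_append_iff] at hw ⊢
      grind
    · have := S₁.one_le_length_of_ne hxu.symm
      have := s.one_le_length_of_ne hxy
      have := T.one_le_length_of_ne hT.ne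
      simp only [length_append]
      omega
  obtain ⟨e, he⟩ := S₁.exists_edge_of_ne hxu.symm
  obtain ⟨f, hf⟩ := s.exists_edge_of_ne hxy
  have hfF : ∀ {a b : V} {T : G.Walk a b}, T.toSubgraph ≤ F → f ∉ T.edges := fun hT hfT =>
    hsF' f hf (mem_edgeSet_of_toSubgraph_le hT hfT)
  exact ⟨e, S₁.edges_subset_edgeSet he, h.four_le_ncard_cyclesThrough
    ⟨hpair h.pq hQ, hpair h.pr hR, h.qr⟩ (by simp [he]) (by simp [he]) (by simp [hf])
    (hfF hP) (hfF hQ) (hfF hR)⟩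

theorem exists_four_le_ncard_cyclesThrough_of_ear_distinct_branches [Finite V]
    {S₁ : G.Walk u x} {S₂ : G.Walk x v} {R₁ : G.Walk u y} {R₂ : G.Walk y v}
    (h : IsThetaTriple (S₁.append S₂) (R₁.append R₂) r) (hP : (S₁.append S₂).toSubgraph ≤ F)
    (hQ : (R₁.append R₂).toSubgraph ≤ F) (hR : r.toSubgraph ≤ F) (hear : IsEarWith F Qs x y)
    (hxu : x ≠ u) (hxv : x ≠ v) (hyu : y ≠ u) (hyv : y ≠ v) :
    ∃ e ∈ G.edgeSet, 4 ≤ (CyclesThrough G e).ncard := by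
  obtain ⟨s, hs, hxy, -, hsF, hsF'⟩ := hear.exists_isPath
  have hS := h.pq.isPath_left
  have hR' := h.pq.isPath_right
  have hS₁₂ : ∀ w ∈ S₁.support, w ∈ S₂.support → w = x := fun w => hS.eq_of_mem_support_append
  have hR₁₂ : ∀ w ∈ R₁.support, w ∈ R₂.support → w = y := fun w => hR'.eq_of_mem_support_append
  have hPQ := h.pq.internallyDisjoint
  have hPR := h.pr.internallyDisjoint
  have hQR := h.qr.internallyDisjoint
  simp only [mem_support_append_iff] at hPQ hPR hQR
  have hsA : ∀ w ∈ s.support, (w ∈ S₁.support ∨ w ∈ S₂.support) ∨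
      (w ∈ R₁.support ∨ w ∈ R₂.support) ∨ w ∈ r.support → w = x ∨ w = y := by
    intro w hw hw'
    refine hsF w hw ?_
    rw [← mem_support_append_iff, ← mem_support_append_iff] at hw'
    rcases hw' with hw' | hw' | hw'
    exacts [mem_verts_of_toSubgraph_le hP hw', mem_verts_of_toSubgraph_le hQ hw',
      mem_verts_of_toSubgraph_le hR hw']
  have hends : u ∈ S₁.support ∧ x ∈ S₁.support ∧ x ∈ S₂.support ∧ v ∈ S₂.support ∧
      u ∈ R₁.support ∧ y ∈ R₁.support ∧ y ∈ R₂.support ∧ v ∈ R₂.support ∧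
      u ∈ r.support ∧ v ∈ r.support := by simp
  have hX : (S₁.append s).IsPath := hS.of_append_left.append hs (by grind)
  have hY : (r.append R₂.reverse).IsPath := h.pr.isPath_right.append hR'.of_append_right.reverse
    (by simp only [support_reverse, List.mem_reverse]; grind)
  have := S₁.one_le_length_of_ne hxu.symm
  have := s.one_le_length_of_ne hxy
  have := R₁.one_le_length_of_ne hyu.symm
  have := R₂.one_le_length_of_ne hyv
  have := r.one_le_length_of_ne h.pq.ne
  have hθ : IsThetaTriple (S₁.append s) R₁ (r.append R₂.reverse) := by
    refine ⟨⟨hX, hR'.of_append_left, ?_, ?_⟩, ⟨hX, hY, ?_, ?_⟩,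
      ⟨hR'.of_append_left, hY, ?_, ?_⟩⟩ <;>
      simp only [mem_support_append_iff, support_reverse, List.mem_reverse, length_append,
        length_reverse] <;> first | omega | grind
  obtain ⟨e, he⟩ := S₁.exists_edge_of_ne hxu.symm
  obtain ⟨f, hf⟩ := s.exists_edge_of_ne hxy
  have hfF : ∀ {a b : V} {T : G.Walk a b}, T.toSubgraph ≤ F → f ∉ T.edges := fun hT hfT =>
    hsF' f hf (mem_edgeSet_of_toSubgraph_le hT hfT)
  exact ⟨e, S₁.edges_subset_edgeSet he, h.four_le_ncard_cyclesThrough hθ (by simp [he])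
    (by simp [he]) (by simp [hf]) (hfF hP) (hfF hQ) (hfF hR)⟩

end IsThetaTriple

end Walk

theorem IsThetaSubUV.exists_four_le_ncard_cyclesThrough [Finite V] {A Q : G.Subgraph}
    (hA : IsThetaSubUV A 3 u v) (hQ : IsEarWith A Q a b) (hau : a ≠ u) (hav : a ≠ v)
    (hbu : b ≠ u) (hbv : b ≠ v) : ∃ e ∈ G.edgeSet, 4 ≤ (CyclesThrough G e).ncard := by
  obtain ⟨-, p, hpath, hlen, hdisj, hsing, rfl⟩ := hA
  have hpair : ∀ i j, i ≠ j → Walk.IsCyclePair (p i) (p j) := fun i j hij => by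
    refine ⟨hpath i, hpath j, hdisj i j hij, ?_⟩
    by_contra!
    have := hlen i
    have := hlen j
    exact hij (hsing (show (p i).length = 1 by omega) (show (p j).length = 1 by omega))
  have hθ : ∀ i j k, i ≠ j → i ≠ k → j ≠ k → Walk.IsThetaTriple (p i) (p j) (p k) :=
    fun i j k hij hik hjk => ⟨hpair i j hij, hpair i k hik, hpair j k hjk⟩
  have hle : ∀ i, (p i).toSubgraph ≤ ⨆ i, (p i).toSubgraph := le_iSup (fun i => (p i).toSubgraph)
  have hmem : ∀ x ∈ (⨆ i, (p i).toSubgraph).verts, ∃ i, x ∈ (p i).support := fun x hx => by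
    obtain ⟨i, hi⟩ := Set.mem_iUnion.mp (Subgraph.verts_iSup ▸ hx)
    exact ⟨i, (Walk.mem_verts_toSubgraph _).mp hi⟩
  obtain ⟨i, hai⟩ := hmem a hQ.1
  obtain ⟨j, hbj⟩ := hmem b hQ.2.1
  by_cases hij : i = j
  · subst hij
    obtain ⟨j, k, hij, hik, hjk⟩ : ∃ j k : Fin 3, i ≠ j ∧ i ≠ k ∧ j ≠ k := by
      fin_cases i <;> decide
    have hijk := hθ i j k hij hik hjk
    rcases (p i).exists_append_append_of_mem_support hai hbj with
      ⟨S₁, S₂, S₃, hi⟩ | ⟨S₁, S₂, S₃, hi⟩ <;> rw [hi] at hijk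
    · exact hijk.exists_four_le_ncard_cyclesThrough_of_ear_same_branch (hi ▸ hle i) (hle j)
        (hle k) hQ hau
    · exact hijk.exists_four_le_ncard_cyclesThrough_of_ear_same_branch (hi ▸ hle i) (hle j)
        (hle k) hQ.symm hbu
  · obtain ⟨k, hik, hjk⟩ : ∃ k : Fin 3, i ≠ k ∧ j ≠ k := by
      fin_cases i <;> fin_cases j <;> simp at hij ⊢ <;> decide
    obtain ⟨S₁, S₂, hi⟩ := (p i).mem_support_iff_exists_append.mp hai
    obtain ⟨R₁, R₂, hj⟩ := (p j).mem_support_iff_exists_append.mp hbj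
    have hijk := hθ i j k hij hik hjk
    rw [hi, hj] at hijk
    exact hijk.exists_four_le_ncard_cyclesThrough_of_ear_distinct_branches (hi ▸ hle i)
      (hj ▸ hle j) (hle k) hQ hau hav hbu hbv

end SimpleGraph

/-- Every `θ₃'`-graph is a nice 4-cactus: every edge lies in at most 4 cycles
and some edge lies in exactly 4 cycles. -/
theorem thetaPrime_nice_four_cactus (G : SimpleGraph V)
    (hG : IsThetaPrimeGraph G) :
    IsKCactus G 4 ∧ ∃ e ∈ G.edgeSet, (CyclesThrough G e).ncard = 4 := by
  obtain ⟨A, Q, u, v, a, b, hA, hQ, hau, hav, hbu, hbv, hAQ⟩ := hG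
  obtain ⟨q, hq, hab, rfl, hqA, -⟩ := hQ.exists_isPath
  have : Finite V := by
    rw [← Set.finite_univ_iff, ← Subgraph.verts_top, ← hAQ, Subgraph.verts_sup]
    exact hA.finite_verts.union q.finite_verts_toSubgraph
  have hconn : G.Connected :=
    Subgraph.topIso.connected_iff.mp (hAQ ▸ hA.connected.sup_toSubgraph q hQ.1)
  have hcard : G.edgeSet.ncard + 1 ≤ Nat.card V + 3 := by
    have h₁ := A.ncard_edgeSet_sup_toSubgraph_le q
    have h₂ := A.ncard_verts_sup_toSubgraph hq hab hQ.1 hQ.2.1 hqA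
    have h₃ := hA.ncard_edgeSet_le_ncard_verts_add_one
    rw [hAQ, Subgraph.edgeSet_top] at h₁
    rw [hAQ, Subgraph.verts_top, Set.ncard_univ] at h₂
    omega
  have hle : ∀ e ∈ G.edgeSet, (CyclesThrough G e).ncard ≤ 4 := fun e he => by
    have := two_mul_ncard_cyclesThrough_le hconn hcard he
    omega
  obtain ⟨e, he, h4⟩ := hA.exists_four_le_ncard_cyclesThrough hQ hau hav hbu hbv
  exact ⟨⟨hconn, hle⟩, e, he, le_antisymm (hle e he) h4⟩
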